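/- Let K ≥ 2 be a natural number and let a₁, …, a_K be positive real numbers. Let S = {x ∈ ℝ^{K−1} : xᵢ > 0 for all i, and x₁ + ⋯ + x_{K−1} < 1}. Then ∫_S (∏_{i=1}^{K−1} xᵢ^{aᵢ−1}) · (1 − Σ_{i=1}^{K−1} xᵢ)^{a_K−1} dx = (∏_{k=1}^K Γ(a_k)) / Γ(a₁ + ⋯ + a_K), where Γ denotes the Gamma function and the integral is with respect to Lebesgue measure on ℝ^{K−1}. -/

import Mathlib

/-!
Integrate out the last coordinate. For `y` in the `n`-dimensional open simplex the slice is
`t ∈ (0, s)` with `s = 1 - ∑ yᵢ`, and the substitution `t = s x` turns the inner integral into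
`B(u, v) s ^ (u + v - 1)`, where `u, v` are the last two parameters. What remains is the Dirichlet
integral in dimension `n` with `u, v` merged into `u + v`, and `Γ(u) Γ(v) / Γ(u + v)` times the
merged normalizing constant is the original one. Working with `ℝ≥0∞`-valued integrals lets
Tonelli apply without any integrability bookkeeping.
-/

open MeasureTheory Set ProbabilityTheory
open scoped ENNReal

lemma lintegral_Ioo_zero_one_rpow_mul_one_sub_rpow {u v : ℝ} (hu : 0 < u) (hv : 0 < v) :
    ∫⁻ x in Ioo 0 1, ENNReal.ofReal (x ^ (u - 1) * (1 - x) ^ (v - 1))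
      = ENNReal.ofReal (beta u v) := by
  have hB := beta_pos hu hv
  have h := lintegral_betaPDF_eq_one hu hv
  simp_rw [lintegral_betaPDF, mul_assoc, ENNReal.ofReal_mul (one_div_pos.2 hB).le] at h
  rwa [lintegral_const_mul _ (by fun_prop), one_div, ENNReal.ofReal_inv_of_pos hB,
    ← ENNReal.div_eq_inv_mul, ENNReal.div_eq_one_iff (by simpa) ENNReal.ofReal_ne_top] at h

lemma setLIntegral_Ioo_zero_eq_mul_setLIntegral_Ioo_zero_one {s : ℝ} (hs : 0 < s)
    {f : ℝ → ℝ≥0∞} (hf : Measurable f) :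
    ∫⁻ t in Ioo 0 s, f t = ENNReal.ofReal s * ∫⁻ x in Ioo 0 1, f (s * x) := by
  conv_lhs => rw [← Real.smul_map_volume_mul_left hs.ne', abs_of_pos hs]
  rw [Measure.restrict_smul, lintegral_smul_measure,
    setLIntegral_map measurableSet_Ioo hf (measurable_const_mul s),
    preimage_const_mul_Ioo₀ _ _ hs, zero_div, div_self hs.ne', smul_eq_mul]

lemma lintegral_Ioo_rpow_mul_sub_rpow {u v s : ℝ} (hu : 0 < u) (hv : 0 < v) (hs : 0 < s) :
    ∫⁻ t in Ioo 0 s, ENNReal.ofReal (t ^ (u - 1) * (s - t) ^ (v - 1))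
      = ENNReal.ofReal (s ^ (u + v - 1) * beta u v) := by
  have hscaled : ∀ x ∈ Ioo (0 : ℝ) 1, (s * x) ^ (u - 1) * (s - s * x) ^ (v - 1)
      = s ^ (u + v - 2) * (x ^ (u - 1) * (1 - x) ^ (v - 1)) := by
    rintro x ⟨hx0, hx1⟩
    rw [← mul_one_sub, Real.mul_rpow hs.le hx0.le, Real.mul_rpow hs.le (by linarith),
      show u + v - 2 = (u - 1) + (v - 1) by ring, Real.rpow_add hs]
    ring
  rw [setLIntegral_Ioo_zero_eq_mul_setLIntegral_Ioo_zero_one hs (by fun_prop),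
    setLIntegral_congr_fun measurableSet_Ioo fun x hx => by
      rw [hscaled x hx, ENNReal.ofReal_mul (by positivity)],
    lintegral_const_mul _ (by fun_prop), lintegral_Ioo_zero_one_rpow_mul_one_sub_rpow hu hv,
    ← ENNReal.ofReal_mul (by positivity), ← ENNReal.ofReal_mul hs.le, ← mul_assoc, mul_comm s,
    ← Real.rpow_add_one hs.ne', show u + v - 2 + 1 = u + v - 1 by ring]

theorem lintegral_pi_eq_lintegral_lintegral_insertNth {α : Type*} [MeasureSpace α]
    [SigmaFinite (volume : Measure α)] {n : ℕ} (i : Fin (n + 1))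
    {f : (Fin (n + 1) → α) → ℝ≥0∞} (hf : Measurable f) :
    ∫⁻ x, f x = ∫⁻ y : Fin n → α, ∫⁻ t, f (i.insertNth t y) := by
  have hmp := (volume_preserving_piFinSuccAbove (fun _ : Fin (n + 1) => α) i).symm
  rw [← hmp.lintegral_comp hf, Measure.volume_eq_prod]
  exact lintegral_prod_symm' _ (hf.comp (MeasurableEquiv.measurable _))

theorem lintegral_pi_eq_lintegral_lintegral_snoc {α : Type*} [MeasureSpace α]
    [SigmaFinite (volume : Measure α)] {n : ℕ}
    {f : (Fin (n + 1) → α) → ℝ≥0∞} (hf : Measurable f) :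
    ∫⁻ x, f x = ∫⁻ y : Fin n → α, ∫⁻ t, f (Fin.snoc y t) := by
  simp_rw [lintegral_pi_eq_lintegral_lintegral_insertNth (Fin.last n) hf, Fin.insertNth_last']

section DirichletIntegral

variable {n : ℕ}

def openSimplex (n : ℕ) : Set (Fin n → ℝ) := {x | (∀ i, 0 < x i) ∧ ∑ i, x i < 1}

noncomputable def dirichletKernel (a : Fin (n + 1) → ℝ) (x : Fin n → ℝ) : ℝ :=
  (∏ i, x i ^ (a i.castSucc - 1)) * (1 - ∑ i, x i) ^ (a (Fin.last n) - 1)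

noncomputable def multiBeta (a : Fin n → ℝ) : ℝ :=
  (∏ k, Real.Gamma (a k)) / Real.Gamma (∑ k, a k)

def mergeLastTwo (a : Fin (n + 2) → ℝ) : Fin (n + 1) → ℝ :=
  Fin.snoc (fun i => a i.castSucc.castSucc) (a (Fin.last n).castSucc + a (Fin.last (n + 1)))

lemma measurableSet_openSimplex (n : ℕ) : MeasurableSet (openSimplex n) := by
  simp only [openSimplex, ofPred_and, ofPred_forall]
  exact (MeasurableSet.iInter fun i => measurableSet_lt measurable_const (measurable_pi_apply i))
    |>.inter (measurableSet_lt (by fun_prop) measurable_const)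

@[fun_prop]
lemma measurable_dirichletKernel (a : Fin (n + 1) → ℝ) :
    Measurable (dirichletKernel a) := by
  unfold dirichletKernel
  fun_prop

lemma dirichletKernel_nonneg (a : Fin (n + 1) → ℝ) {x : Fin n → ℝ}
    (hx : x ∈ openSimplex n) : 0 ≤ dirichletKernel a x :=
  mul_nonneg (Finset.prod_nonneg fun i _ => Real.rpow_nonneg (hx.1 i).le _)
    (Real.rpow_nonneg (sub_nonneg.2 hx.2.le) _)

lemma multiBeta_pos [NeZero n] {a : Fin n → ℝ} (ha : ∀ k, 0 < a k) :
    0 < multiBeta a :=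
  div_pos (Finset.prod_pos fun k _ => Real.Gamma_pos_of_pos (ha k))
    (Real.Gamma_pos_of_pos (Finset.sum_pos (fun k _ => ha k) Finset.univ_nonempty))

lemma snoc_mem_openSimplex_iff {y : Fin n → ℝ} {t : ℝ} :
    (Fin.snoc y t : Fin (n + 1) → ℝ) ∈ openSimplex (n + 1) ↔
      y ∈ openSimplex n ∧ t ∈ Ioo 0 (1 - ∑ i, y i) := by
  simp only [openSimplex, mem_ofPred_eq, Fin.forall_fin_succ', Fin.snoc_castSucc, Fin.snoc_last,
    Fin.sum_snoc, mem_Ioo]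
  constructor
  · rintro ⟨⟨hy, ht⟩, hsum⟩
    exact ⟨⟨hy, by linarith⟩, ht, by linarith⟩
  · rintro ⟨⟨hy, -⟩, ht, hts⟩
    exact ⟨⟨hy, ht⟩, by linarith⟩

lemma dirichletKernel_snoc (a : Fin (n + 2) → ℝ) (y : Fin n → ℝ) (t : ℝ) :
    dirichletKernel a (Fin.snoc y t) = (∏ i, y i ^ (a i.castSucc.castSucc - 1)) *
      (t ^ (a (Fin.last n).castSucc - 1) *
        ((1 - ∑ i, y i) - t) ^ (a (Fin.last (n + 1)) - 1)) := by
  simp only [dirichletKernel, Fin.prod_univ_castSucc, Fin.snoc_castSucc, Fin.snoc_last,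
    Fin.sum_snoc, sub_add_eq_sub_sub]
  ring

lemma dirichletKernel_mergeLastTwo (a : Fin (n + 2) → ℝ) (y : Fin n → ℝ) :
    dirichletKernel (mergeLastTwo a) y = (∏ i, y i ^ (a i.castSucc.castSucc - 1)) *
      (1 - ∑ i, y i) ^ (a (Fin.last n).castSucc + a (Fin.last (n + 1)) - 1) := by
  simp [dirichletKernel, mergeLastTwo]

lemma multiBeta_eq_beta_mul_multiBeta_mergeLastTwo {a : Fin (n + 2) → ℝ}
    (hu : 0 < a (Fin.last n).castSucc) (hv : 0 < a (Fin.last (n + 1))) :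
    multiBeta a =
      beta (a (Fin.last n).castSucc) (a (Fin.last (n + 1))) * multiBeta (mergeLastTwo a) := by
  have hΓ := (Real.Gamma_pos_of_pos (add_pos hu hv)).ne'
  simp only [multiBeta, beta, mergeLastTwo, Fin.prod_univ_castSucc, Fin.sum_univ_castSucc,
    Fin.snoc_castSucc, Fin.snoc_last, add_assoc]
  field_simp

lemma lintegral_indicator_openSimplex_snoc {a : Fin (n + 2) → ℝ} (ha : ∀ k, 0 < a k)
    (y : Fin n → ℝ) :
    ∫⁻ t, (openSimplex (n + 1)).indicator (fun x => ENNReal.ofReal (dirichletKernel a x))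
        (Fin.snoc y t)
      = (openSimplex n).indicator (fun y => ENNReal.ofReal
          (beta (a (Fin.last n).castSucc) (a (Fin.last (n + 1))) *
            dirichletKernel (mergeLastTwo a) y)) y := by
  by_cases hy : y ∈ openSimplex n
  · have hs : 0 < 1 - ∑ i, y i := sub_pos.2 hy.2
    have hC : 0 ≤ ∏ i, y i ^ (a i.castSucc.castSucc - 1) :=
      Finset.prod_nonneg fun i _ => Real.rpow_nonneg (hy.1 i).le _
    have hslice : (fun t : ℝ => (Fin.snoc y t : Fin (n + 1) → ℝ)) ⁻¹' openSimplex (n + 1)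
        = Ioo 0 (1 - ∑ i, y i) := by
      ext t
      simp [snoc_mem_openSimplex_iff, hy]
    simp_rw [indicator_of_mem hy,
      ← indicator_comp_right (fun t : ℝ => (Fin.snoc y t : Fin (n + 1) → ℝ)), hslice]
    rw [lintegral_indicator measurableSet_Ioo]
    simp_rw [Function.comp_apply, dirichletKernel_snoc, ENNReal.ofReal_mul hC]
    rw [lintegral_const_mul _ (by fun_prop), lintegral_Ioo_rpow_mul_sub_rpow (ha _) (ha _) hs,
      ← ENNReal.ofReal_mul hC, dirichletKernel_mergeLastTwo]
    congr 1
    ring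
  · have hzero : ∀ t, (Fin.snoc y t : Fin (n + 1) → ℝ) ∉ openSimplex (n + 1) := fun t h =>
      hy (snoc_mem_openSimplex_iff.1 h).1
    simp [indicator_of_notMem hy, indicator_of_notMem (hzero _)]

theorem lintegral_openSimplex_dirichletKernel {a : Fin (n + 1) → ℝ}
    (ha : ∀ k, 0 < a k) :
    ∫⁻ x in openSimplex n, ENNReal.ofReal (dirichletKernel a x)
      = ENNReal.ofReal (multiBeta a) := by
  induction n with
  | zero =>
    have huniv : openSimplex 0 = univ := by ext x; simp [openSimplex]
    simp [huniv, dirichletKernel, multiBeta, (Real.Gamma_pos_of_pos (ha 0)).ne', volume_pi]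
  | succ n ih =>
    have hu := ha (Fin.last n).castSucc
    have hv := ha (Fin.last (n + 1))
    have hmerge : ∀ k, 0 < mergeLastTwo a k :=
      Fin.lastCases (by simpa [mergeLastTwo] using add_pos hu hv) (by simp [mergeLastTwo, ha])
    rw [← lintegral_indicator (measurableSet_openSimplex _),
      lintegral_pi_eq_lintegral_lintegral_snoc
        ((by fun_prop : Measurable _).indicator (measurableSet_openSimplex _))]
    simp_rw [lintegral_indicator_openSimplex_snoc ha]
    rw [lintegral_indicator (measurableSet_openSimplex _)]
    simp_rw [ENNReal.ofReal_mul (beta_pos hu hv).le]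
    rw [lintegral_const_mul _ (by fun_prop), ih hmerge, ← ENNReal.ofReal_mul (beta_pos hu hv).le,
      multiBeta_eq_beta_mul_multiBeta_mergeLastTwo hu hv]

theorem integral_openSimplex_dirichletKernel {a : Fin (n + 1) → ℝ}
    (ha : ∀ k, 0 < a k) :
    ∫ x in openSimplex n, dirichletKernel a x = multiBeta a := by
  rw [integral_eq_lintegral_of_nonneg_ae (ae_restrict_of_forall_mem (measurableSet_openSimplex n)
      fun x hx => dirichletKernel_nonneg a hx) (by fun_prop),
    lintegral_openSimplex_dirichletKernel ha, ENNReal.toReal_ofReal (multiBeta_pos ha).le]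

end DirichletIntegral

/-- Normalizing constant of the Dirichlet distribution: for positive parameters
`a₁, …, a_K` (`K ≥ 2`), the Dirichlet integral over the open simplex in `ℝ^{K−1}`
equals `(∏ₖ Γ(aₖ)) / Γ(∑ₖ aₖ)`. -/
theorem stmt_10 (K : ℕ) (hK : 2 ≤ K) (a : Fin K → ℝ) (ha : ∀ k, 0 < a k) :
    (∫ x in {x : Fin (K - 1) → ℝ | (∀ i, 0 < x i) ∧ ∑ i, x i < 1},
        (∏ i : Fin (K - 1), x i ^ (a (Fin.castLE (Nat.sub_le K 1) i) - 1)) *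
          (1 - ∑ i, x i) ^ (a ⟨K - 1, by omega⟩ - 1))
      = (∏ k, Real.Gamma (a k)) / Real.Gamma (∑ k, a k) := by
  obtain ⟨n, rfl⟩ : ∃ n, K = n + 1 := ⟨K - 1, by omega⟩
  -- `Fin.castLE _` is now `Fin.castSucc` and `⟨n + 1 - 1, _⟩` is `Fin.last n`, definitionally.
  exact integral_openSimplex_dirichletKernel ha
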